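/- Let $G_k(\sigma^2_0)$ denote the law of the $k$-th iterate of the chain $\sigma^2_k = (\sigma^2_{k-1} U_k + C)/V_k$ (with $U_k \sim \chi^2_p$, $V_k \sim \chi^2_{n+p}$ all independent, $n \ge 5$, $C > 0$), and let $G = \mathrm{InverseGamma}(n/2, C/2)$ be its stationary distribution. Then for every $k \ge 0$, the Wasserstein-1 distance satisfies $d_W[G_k(\sigma^2_0), G] \ge \left|\sigma^2_0 - \frac{C}{n-2}\right|\left(\frac{p}{n+p-2}\right)^k$. -/

import Mathlib

open MeasureTheory ProbabilityTheory

/-- The chi-squared distribution with `d` degrees of freedom. -/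
noncomputable def chiSqMeasure (d : ℕ) : Measure ℝ :=
  gammaMeasure ((d : ℝ) / 2) (1 / 2)

/-- The inverse-gamma distribution with shape `a` and scale `b`. -/
noncomputable def invGammaMeasure (a b : ℝ) : Measure ℝ :=
  (gammaMeasure a b).map (fun x => x⁻¹)

/-- Wasserstein-1 distance between two measures on `ℝ`, in its dual
(Kantorovich–Rubinstein) form: the supremum of `|∫ h dP - ∫ h dQ|` over
1-Lipschitz functions `h`. -/
noncomputable def wassersteinDist (P Q : Measure ℝ) : ℝ :=
  sSup { d : ℝ | ∃ h : ℝ → ℝ, LipschitzWith 1 h ∧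
    d = |(∫ x, h x ∂P) - (∫ x, h x ∂Q)| }

/-! The identity is 1-Lipschitz, so `d_W(P, Q) ≥ |∫ x dP - ∫ x dQ|`, and it suffices to compute
means. Since `σ²_k` is a measurable function of `(U_j, V_j)_{j ≤ k}`, it is independent of `U_{k+1}`
and `V_{k+1}`; with `E U = p` and `E V⁻¹ = 1/(n+p-2)` this gives the affine recursion
`E σ²_{k+1} = (p E σ²_k + C) / (n+p-2)`. Its fixed point `C/(n-2)` is the mean of
`InverseGamma(n/2, C/2)`, so `E σ²_k - C/(n-2) = (σ²_0 - C/(n-2)) (p/(n+p-2))^k`. -/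

open Real Set

lemma LipschitzWith.abs_integral_sub_apply_zero_le {P : Measure ℝ} [IsProbabilityMeasure P]
    (hP : Integrable (fun x => x) P) {h : ℝ → ℝ} (hh : LipschitzWith 1 h) :
    |∫ x, h x ∂P - h 0| ≤ ∫ x, |x| ∂P := by
  have hdev : ∀ x, |h x - h 0| ≤ |x| := fun x => by
    simpa [Real.dist_eq] using hh.dist_le_mul x 0
  have hint : Integrable (fun x => h x - h 0) P :=
    hP.abs.mono (hh.continuous.aestronglyMeasurable.sub aestronglyMeasurable_const)
      (ae_of_all _ fun x => by simpa using hdev x)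
  have hhint : Integrable h P := by
    simpa [sub_eq_add_neg] using integrable_add_const_iff.1 hint
  calc |∫ x, h x ∂P - h 0| = |∫ x, (h x - h 0) ∂P| := by
        simp [integral_sub hhint (integrable_const _)]
    _ ≤ ∫ x, |h x - h 0| ∂P := abs_integral_le_integral_abs
    _ ≤ ∫ x, |x| ∂P := integral_mono hint.abs hP.abs hdev

lemma abs_integral_sub_integral_le_wassersteinDist {P Q : Measure ℝ} [IsProbabilityMeasure P]
    [IsProbabilityMeasure Q] (hP : Integrable (fun x => x) P) (hQ : Integrable (fun x => x) Q)
    {h : ℝ → ℝ} (hh : LipschitzWith 1 h) :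
    |∫ x, h x ∂P - ∫ x, h x ∂Q| ≤ wassersteinDist P Q := by
  refine le_csSup ⟨∫ x, |x| ∂P + ∫ x, |x| ∂Q, ?_⟩ ⟨h, hh, rfl⟩
  rintro _ ⟨g, hg, rfl⟩
  calc |∫ x, g x ∂P - ∫ x, g x ∂Q| = |(∫ x, g x ∂P - g 0) - (∫ x, g x ∂Q - g 0)| := by ring_nf
    _ ≤ |∫ x, g x ∂P - g 0| + |∫ x, g x ∂Q - g 0| := abs_sub _ _
    _ ≤ ∫ x, |x| ∂P + ∫ x, |x| ∂Q := add_le_add (hg.abs_integral_sub_apply_zero_le hP)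
        (hg.abs_integral_sub_apply_zero_le hQ)

lemma abs_integral_sub_integral_le_wassersteinDist_map {Ω : Type*} [MeasurableSpace Ω]
    {μ : Measure Ω} [IsProbabilityMeasure μ] {Y : Ω → ℝ} (hY : Integrable Y μ) {Q : Measure ℝ}
    [IsProbabilityMeasure Q] (hQ : Integrable (fun x => x) Q) :
    |∫ ω, Y ω ∂μ - ∫ x, x ∂Q| ≤ wassersteinDist (μ.map Y) Q := by
  have := Measure.isProbabilityMeasure_map (μ := μ) hY.aemeasurable
  have hYlaw : HasLaw Y (μ.map Y) μ := ⟨hY.aemeasurable, rfl⟩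
  rw [hYlaw.integral_eq]
  exact abs_integral_sub_integral_le_wassersteinDist
    ((integrable_map_measure measurable_id'.aestronglyMeasurable hY.aemeasurable).2 hY) hQ
    LipschitzWith.id

namespace ProbabilityTheory

section GammaMoments

variable {a r : ℝ}

lemma integrable_gammaMeasure_iff (ha : 0 < a) (hr : 0 < r) {f : ℝ → ℝ} :
    Integrable f (gammaMeasure a r) ↔ Integrable (fun x => gammaPDFReal a r x * f x) := by
  rw [gammaMeasure]
  unfold gammaPDF
  rw [integrable_withDensity_iff_integrable_smul'
    (measurable_gammaPDFReal a r).ennreal_ofReal (ae_of_all _ fun _ => ENNReal.ofReal_lt_top)]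
  simp [ENNReal.toReal_ofReal (gammaPDFReal_nonneg ha hr _)]

lemma integral_gammaMeasure (ha : 0 < a) (hr : 0 < r) (f : ℝ → ℝ) :
    ∫ x, f x ∂gammaMeasure a r = ∫ x, gammaPDFReal a r x * f x := by
  rw [gammaMeasure]
  unfold gammaPDF
  rw [integral_withDensity_eq_integral_toReal_smul
    (measurable_gammaPDFReal a r).ennreal_ofReal (ae_of_all _ fun _ => ENNReal.ofReal_lt_top)]
  simp [ENNReal.toReal_ofReal (gammaPDFReal_nonneg ha hr _)]

lemma gammaPDFReal_mul_rpow_ae_eq (a r s : ℝ) :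
    (fun x => gammaPDFReal a r x * x ^ s) =ᵐ[volume]
      (Ioi 0).indicator fun x => r ^ a / Gamma a * (x ^ (a + s - 1) * exp (-(r * x))) := by
  filter_upwards [Measure.ae_ne volume 0] with x hx
  rcases hx.lt_or_gt with hneg | hpos
  · simp [gammaPDFReal, hneg.not_ge, hneg.not_gt]
  · rw [indicator_of_mem (mem_Ioi.2 hpos), gammaPDFReal, if_pos hpos.le,
      show a + s - 1 = (a - 1) + s by ring, rpow_add hpos]
    ring

lemma integrable_rpow_gammaMeasure {s : ℝ} (ha : 0 < a) (hr : 0 < r) (has : 0 < a + s) :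
    Integrable (fun x => x ^ s) (gammaMeasure a r) := by
  rw [integrable_gammaMeasure_iff ha hr, integrable_congr (gammaPDFReal_mul_rpow_ae_eq a r s),
    integrable_indicator_iff measurableSet_Ioi]
  have hs : -1 < a + s - 1 := by linarith
  have h := integrableOn_rpow_mul_exp_neg_mul_rpow hs one_pos hr
  simp only [rpow_one, neg_mul] at h
  exact h.const_mul _

lemma integral_rpow_gammaMeasure {s : ℝ} (ha : 0 < a) (hr : 0 < r) (has : 0 < a + s) :
    ∫ x, x ^ s ∂gammaMeasure a r = Gamma (a + s) / (Gamma a * r ^ s) := by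
  rw [integral_gammaMeasure ha hr, integral_congr_ae (gammaPDFReal_mul_rpow_ae_eq a r s),
    integral_indicator measurableSet_Ioi, integral_const_mul,
    integral_rpow_mul_exp_neg_mul_Ioi has hr, div_rpow zero_le_one hr.le, one_rpow, rpow_add hr]
  have := Gamma_pos_of_pos ha
  have := rpow_pos_of_pos hr a
  have := rpow_pos_of_pos hr s
  field_simp

lemma integrable_id_gammaMeasure (ha : 0 < a) (hr : 0 < r) :
    Integrable (fun x => x) (gammaMeasure a r) := by
  simpa using integrable_rpow_gammaMeasure (s := 1) ha hr (by linarith)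

lemma integral_id_gammaMeasure (ha : 0 < a) (hr : 0 < r) :
    ∫ x, x ∂gammaMeasure a r = a / r := by
  have h := integral_rpow_gammaMeasure (s := 1) ha hr (by linarith)
  simp only [rpow_one, Gamma_add_one ha.ne'] at h
  have := Gamma_pos_of_pos ha
  rw [h]
  field_simp

lemma integrable_inv_gammaMeasure (ha : 1 < a) (hr : 0 < r) :
    Integrable (fun x => x⁻¹) (gammaMeasure a r) := by
  simpa [rpow_neg_one] using
    integrable_rpow_gammaMeasure (s := -1) (by linarith) hr (by linarith : 0 < a + -1)

lemma integral_inv_gammaMeasure (ha : 1 < a) (hr : 0 < r) :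
    ∫ x, x⁻¹ ∂gammaMeasure a r = r / (a - 1) := by
  have hΓ : Gamma a = (a - 1) * Gamma (a - 1) := by
    simpa using Gamma_add_one (s := a - 1) (by linarith)
  have := Gamma_pos_of_pos (show 0 < a - 1 by linarith)
  simp_rw [← rpow_neg_one]
  rw [integral_rpow_gammaMeasure (by linarith) hr (by linarith), ← sub_eq_add_neg, hΓ,
    rpow_neg_one]
  field_simp

end GammaMoments

lemma isProbabilityMeasure_chiSqMeasure {d : ℕ} (hd : 0 < d) :
    IsProbabilityMeasure (chiSqMeasure d) :=
  isProbabilityMeasure_gammaMeasure (by positivity) (by norm_num)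

lemma integrable_id_chiSqMeasure {d : ℕ} (hd : 0 < d) :
    Integrable (fun x => x) (chiSqMeasure d) :=
  integrable_id_gammaMeasure (by positivity) (by norm_num)

lemma integral_id_chiSqMeasure {d : ℕ} (hd : 0 < d) : ∫ x, x ∂chiSqMeasure d = d := by
  rw [chiSqMeasure, integral_id_gammaMeasure (by positivity) (by norm_num)]
  ring

lemma integrable_inv_chiSqMeasure {d : ℕ} (hd : 2 < d) :
    Integrable (fun x => x⁻¹) (chiSqMeasure d) := by
  have : (2 : ℝ) < d := by exact_mod_cast hd
  exact integrable_inv_gammaMeasure (by linarith) (by norm_num)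

lemma integral_inv_chiSqMeasure {d : ℕ} (hd : 2 < d) :
    ∫ x, x⁻¹ ∂chiSqMeasure d = ((d : ℝ) - 2)⁻¹ := by
  have : (2 : ℝ) < d := by exact_mod_cast hd
  rw [chiSqMeasure, integral_inv_gammaMeasure (by linarith) (by norm_num)]
  field_simp

lemma isProbabilityMeasure_invGammaMeasure {a b : ℝ} (ha : 0 < a) (hb : 0 < b) :
    IsProbabilityMeasure (invGammaMeasure a b) :=
  have := isProbabilityMeasure_gammaMeasure ha hb
  Measure.isProbabilityMeasure_map measurable_inv.aemeasurable

lemma integrable_id_invGammaMeasure {a b : ℝ} (ha : 1 < a) (hb : 0 < b) :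
    Integrable (fun x => x) (invGammaMeasure a b) :=
  (integrable_map_measure measurable_id'.aestronglyMeasurable measurable_inv.aemeasurable).2
    (integrable_inv_gammaMeasure ha hb)

lemma integral_id_invGammaMeasure {a b : ℝ} (ha : 1 < a) (hb : 0 < b) :
    ∫ x, x ∂invGammaMeasure a b = b / (a - 1) := by
  rw [invGammaMeasure, integral_map measurable_inv.aemeasurable measurable_id'.aestronglyMeasurable,
    integral_inv_gammaMeasure ha hb]

lemma hasLaw_of_map_eq {Ω : Type*} [MeasurableSpace Ω] {μ : Measure Ω} {Y : Ω → ℝ}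
    {ν : Measure ℝ} [NeZero ν] (h : μ.map Y = ν) : HasLaw Y ν μ :=
  ⟨AEMeasurable.of_map_ne_zero (h ▸ NeZero.ne ν), h⟩

lemma HasLaw.integrable_comp {Ω : Type*} [MeasurableSpace Ω] {μ : Measure Ω} {Y : Ω → ℝ}
    {ν : Measure ℝ} (hY : HasLaw Y ν μ) {f : ℝ → ℝ} (hf : Integrable f ν) :
    Integrable (f ∘ Y) μ := by
  rw [← hY.map_eq] at hf
  exact (integrable_map_measure hf.aestronglyMeasurable hY.aemeasurable).1 hf

section GeneratedSigma

variable {Ω ι β : Type*} [MeasurableSpace β] {X : ι → Ω → β} {S T : Finset ι}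

abbrev generatedSigma (X : ι → Ω → β) (S : Finset ι) : MeasurableSpace Ω :=
  MeasurableSpace.comap (fun ω (i : S) => X i ω) inferInstance

lemma measurable_generatedSigma {i : ι} (hi : i ∈ S) : Measurable[generatedSigma X S] (X i) :=
  (measurable_pi_apply (⟨i, hi⟩ : S)).comp (comap_measurable fun ω (j : S) => X j ω)

lemma generatedSigma_mono (h : S ⊆ T) : generatedSigma X S ≤ generatedSigma X T := by
  let := generatedSigma X T
  exact (measurable_pi_lambda _ fun i => measurable_generatedSigma (h i.2)).comap_le

lemma iIndepFun.indepFun_of_measurable_generatedSigma {mΩ : MeasurableSpace Ω} {μ : Measure Ω}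
    (hX : iIndepFun X μ) (hXm : ∀ i, AEMeasurable (X i) μ) (hST : Disjoint S T)
    {γ γ' : Type*} [MeasurableSpace γ] [MeasurableSpace γ'] {f : Ω → γ} {g : Ω → γ'}
    (hf : Measurable[generatedSigma X S] f) (hg : Measurable[generatedSigma X T] g) :
    IndepFun f g μ := by
  rw [IndepFun_iff_Indep]
  exact indep_of_indep_of_le ((IndepFun_iff_Indep _ _ _).1 (hX.indepFun_finset₀ S T hST hXm))
    hf.comap_le hg.comap_le

end GeneratedSigma

section Chain

variable {Ω : Type*} {U V sig : ℕ → Ω → ℝ} {C σ0 : ℝ}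

def innovations (U V : ℕ → Ω → ℝ) (i : ℕ × Bool) : Ω → ℝ :=
  if i.2 then U i.1 else V i.1

def stepsUpTo (k : ℕ) : Finset (ℕ × Bool) :=
  Finset.Iic k ×ˢ Finset.univ

lemma measurable_generatedSigma_stepsUpTo (hsig0 : sig 0 = fun _ => σ0)
    (hsig : ∀ k ω, sig (k + 1) ω = (sig k ω * U (k + 1) ω + C) / V (k + 1) ω) (k : ℕ) :
    Measurable[generatedSigma (innovations U V) (stepsUpTo k)] (sig k) := by
  induction k with
  | zero => rw [hsig0]; exact measurable_const
  | succ k ih =>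
    have hmono := generatedSigma_mono (X := innovations U V)
      (show stepsUpTo k ⊆ stepsUpTo (k + 1) by intro i; simp [stepsUpTo]; omega)
    have hU : Measurable[generatedSigma (innovations U V) (stepsUpTo (k + 1))] (U (k + 1)) :=
      measurable_generatedSigma (X := innovations U V) (i := (k + 1, true)) (by simp [stepsUpTo])
    have hV : Measurable[generatedSigma (innovations U V) (stepsUpTo (k + 1))] (V (k + 1)) :=
      measurable_generatedSigma (X := innovations U V) (i := (k + 1, false)) (by simp [stepsUpTo])
    rw [funext (hsig k)]
    exact (((ih.mono hmono le_rfl).mul hU).add_const C).div hV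

lemma integrable_and_integral_sub_eq_mul_pow {mΩ : MeasurableSpace Ω} {μ : Measure Ω}
    [IsProbabilityMeasure μ] (hindep : iIndepFun (innovations U V) μ) {u v m : ℝ}
    (hUi : ∀ k, Integrable (U k) μ) (hU : ∀ k, ∫ ω, U k ω ∂μ = u)
    (hVi : ∀ k, Integrable (fun ω => (V k ω)⁻¹) μ) (hV : ∀ k, ∫ ω, (V k ω)⁻¹ ∂μ = v)
    (hm : (m * u + C) * v = m) (hsig0 : sig 0 = fun _ => σ0)
    (hsig : ∀ k ω, sig (k + 1) ω = (sig k ω * U (k + 1) ω + C) / V (k + 1) ω) (k : ℕ) :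
    Integrable (sig k) μ ∧ ∫ ω, sig k ω ∂μ - m = (σ0 - m) * (u * v) ^ k := by
  have hX : ∀ i, AEMeasurable (innovations U V i) μ
    | (j, true) => (hUi j).aemeasurable
    | (j, false) => by simpa [innovations, Pi.inv_def] using (hVi j).aemeasurable.inv
  induction k with
  | zero => simp [hsig0]
  | succ k ih =>
    obtain ⟨hint, hmean⟩ := ih
    have hmeas := measurable_generatedSigma_stepsUpTo hsig0 hsig k
    have hSU : IndepFun (sig k) (U (k + 1)) μ :=
      hindep.indepFun_of_measurable_generatedSigma hX (T := {(k + 1, true)})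
        (by simp [stepsUpTo]) hmeas (measurable_generatedSigma (Finset.mem_singleton_self _))
    have hAV : IndepFun (fun ω => sig k ω * U (k + 1) ω + C) (fun ω => (V (k + 1) ω)⁻¹) μ := by
      refine hindep.indepFun_of_measurable_generatedSigma hX
        (S := insert (k + 1, true) (stepsUpTo k)) (T := {(k + 1, false)}) (by simp [stepsUpTo])
        ?_ (measurable_generatedSigma (Finset.mem_singleton_self _)).inv
      exact ((hmeas.mono (generatedSigma_mono (Finset.subset_insert _ _)) le_rfl).mul
        (measurable_generatedSigma (Finset.mem_insert_self _ _))).add_const C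
    have hSUi : Integrable (fun ω => sig k ω * U (k + 1) ω) μ := hSU.integrable_mul hint (hUi _)
    have hA : Integrable (fun ω => sig k ω * U (k + 1) ω + C) μ := hSUi.add (integrable_const C)
    rw [funext fun ω => (hsig k ω).trans (div_eq_mul_inv _ _)]
    refine ⟨hAV.integrable_mul hA (hVi _), ?_⟩
    rw [hAV.integral_fun_mul_eq_mul_integral hA.aestronglyMeasurable
      (hVi _).aestronglyMeasurable, integral_add hSUi (integrable_const C),
      hSU.integral_fun_mul_eq_mul_integral hint.aestronglyMeasurable (hUi _).aestronglyMeasurable,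
      integral_const, probReal_univ, one_smul, hU, hV]
    linear_combination (u * v) * hmean + hm

lemma integrable_and_integral_sub_eq_mul_pow_of_chiSq {mΩ : MeasurableSpace Ω} {μ : Measure Ω}
    [IsProbabilityMeasure μ] {p d : ℕ} (hp : 0 < p) (hd : 2 < d)
    (hU : ∀ k, μ.map (U k) = chiSqMeasure p) (hV : ∀ k, μ.map (V k) = chiSqMeasure d)
    (hindep : iIndepFun (innovations U V) μ) {m : ℝ} (hm : (m * p + C) / (d - 2) = m)
    (hsig0 : sig 0 = fun _ => σ0)
    (hsig : ∀ k ω, sig (k + 1) ω = (sig k ω * U (k + 1) ω + C) / V (k + 1) ω) (k : ℕ) :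
    Integrable (sig k) μ ∧ ∫ ω, sig k ω ∂μ - m = (σ0 - m) * (p / (d - 2)) ^ k := by
  have := isProbabilityMeasure_chiSqMeasure hp
  have := isProbabilityMeasure_chiSqMeasure (by omega : 0 < d)
  have hUlaw k := hasLaw_of_map_eq (hU k)
  have hVlaw k := hasLaw_of_map_eq (hV k)
  simpa [div_eq_mul_inv] using integrable_and_integral_sub_eq_mul_pow hindep
    (fun k => (hUlaw k).integrable_comp (integrable_id_chiSqMeasure hp))
    (fun k => by rw [(hUlaw k).integral_eq, integral_id_chiSqMeasure hp])
    (fun k => (hVlaw k).integrable_comp (integrable_inv_chiSqMeasure hd))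
    (fun k => ((hVlaw k).integral_comp measurable_inv.aestronglyMeasurable).trans
      (integral_inv_chiSqMeasure hd))
    (by rwa [← div_eq_mul_inv]) hsig0 hsig k

end Chain

end ProbabilityTheory

theorem wasserstein_lower_bound_regression_general
    {Ω : Type*} [MeasurableSpace Ω] (μ : Measure Ω) [IsProbabilityMeasure μ]
    (n p : ℕ) (hn : 5 ≤ n) (hp : 1 ≤ p) (C : ℝ) (hC : 0 < C)
    (σ0 : ℝ)
    (U V : ℕ → Ω → ℝ)
    (hU : ∀ k, μ.map (U k) = chiSqMeasure p)
    (hV : ∀ k, μ.map (V k) = chiSqMeasure (n + p))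
    (hindep : iIndepFun
      (fun i : ℕ × Bool => if i.2 then U i.1 else V i.1) μ)
    (sig : ℕ → Ω → ℝ)
    (hsig0 : sig 0 = fun _ => σ0)
    (hsig : ∀ k ω, sig (k + 1) ω = (sig k ω * U (k + 1) ω + C) / V (k + 1) ω) :
    ∀ k : ℕ,
      |σ0 - C / ((n : ℝ) - 2)| * ((p : ℝ) / ((n : ℝ) + (p : ℝ) - 2)) ^ k
        ≤ wassersteinDist (μ.map (sig k)) (invGammaMeasure ((n : ℝ) / 2) (C / 2)) := by
  intro k
  have hnR : (5 : ℝ) ≤ n := by exact_mod_cast hn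
  have hpR : (0 : ℝ) ≤ p := p.cast_nonneg
  have hd : ((n + p : ℕ) : ℝ) - 2 = n + p - 2 := by push_cast; ring
  have hfix : (C / (n - 2) * p + C) / ((n + p : ℕ) - 2) = C / (n - 2) := by
    have : (n : ℝ) - 2 ≠ 0 := by linarith
    have : (n : ℝ) + p - 2 ≠ 0 := by linarith
    rw [hd]
    field_simp
    ring
  obtain ⟨hint, hmean⟩ :=
    integrable_and_integral_sub_eq_mul_pow_of_chiSq hp (by omega) hU hV hindep hfix hsig0 hsig k
  have := isProbabilityMeasure_invGammaMeasure (a := n / 2) (b := C / 2) (by linarith) (by linarith)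
  calc |σ0 - C / ((n : ℝ) - 2)| * ((p : ℝ) / ((n : ℝ) + (p : ℝ) - 2)) ^ k
      = |∫ ω, sig k ω ∂μ - ∫ x, x ∂invGammaMeasure (n / 2) (C / 2)| := by
        rw [integral_id_invGammaMeasure (by linarith) (by linarith),
          show C / 2 / ((n : ℝ) / 2 - 1) = C / (n - 2) by field_simp, hmean, hd, abs_mul,
          abs_of_nonneg (pow_nonneg (div_nonneg hpR (by linarith)) k)]
    _ ≤ _ := abs_integral_sub_integral_le_wassersteinDist_map hint
      (integrable_id_invGammaMeasure (by linarith) (by linarith))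

/-- lower bound for the Wasserstein distance of the marginal
`σ²`-chain of the standard Bayesian regression Gibbs sampler to its stationary
distribution `G = InverseGamma(n/2, C/2)`:
`d_W[G_k(σ²₀), G] ≥ |σ²₀ - C/(n-2)| (p/(n+p-2))^k`. -/
theorem wasserstein_lower_bound_regression
    {Ω : Type*} [MeasurableSpace Ω] (μ : Measure Ω) [IsProbabilityMeasure μ]
    (n p : ℕ) (hn : 5 ≤ n) (hp : 1 ≤ p) (C : ℝ) (hC : 0 < C)
    (σ0 : ℝ) (hσ0 : 0 < σ0)
    (U V : ℕ → Ω → ℝ)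
    (hU : ∀ k, μ.map (U k) = chiSqMeasure p)
    (hV : ∀ k, μ.map (V k) = chiSqMeasure (n + p))
    (hindep : iIndepFun
      (fun i : ℕ × Bool => if i.2 then U i.1 else V i.1) μ)
    (sig : ℕ → Ω → ℝ)
    (hsig0 : sig 0 = fun _ => σ0)
    (hsig : ∀ k ω, sig (k + 1) ω = (sig k ω * U (k + 1) ω + C) / V (k + 1) ω) :
    ∀ k : ℕ,
      |σ0 - C / ((n : ℝ) - 2)| * ((p : ℝ) / ((n : ℝ) + (p : ℝ) - 2)) ^ k
        ≤ wassersteinDist (μ.map (sig k)) (invGammaMeasure ((n : ℝ) / 2) (C / 2)) :=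
  wasserstein_lower_bound_regression_general μ n p hn hp C hC σ0 U V hU hV hindep sig hsig0 hsig
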